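/- Let C be a k-dimensional F_{q^m}-linear code in (F_{q^m})^n and fix 1 ≤ i ≤ n. The lattice-rank weights are strictly increasing in j: ℓ_j^{(i)}(C) < ℓ_{j+1}^{(i)}(C) for 1 ≤ j ≤ k−1; consequently ℓ_j^{(i)}(C) ≤ n − k + j and ℓ_j^{(i)}(C) ≥ ⌈d/i⌉ + j − 1, where d is the minimum rank of a nonzero codeword. -/
import Mathlib


open Submodule

/-- The rank of a vector `v ∈ L^n`: the `Fq`-dimension of the `Fq`-span of its entries. -/
noncomputable def rkVec (Fq : Type*) {L : Type*} [Field Fq] [Field L] [Algebra Fq L]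
    {n : ℕ} (v : Fin n → L) : ℕ :=
  Module.finrank Fq ↥(Submodule.span Fq (Set.range v))

/-- The rank-metric lattice `L_i(n,m;q)`: subspaces of `L^n` spanned by their vectors of
rank at most `i`. -/
def RML (Fq L : Type*) [Field Fq] [Field L] [Algebra Fq L] (n i : ℕ) :
    Set (Submodule L (Fin n → L)) :=
  {X | X = Submodule.span L {x | x ∈ X ∧ rkVec Fq x ≤ i}}

/-- The meet in the rank-metric lattice: span of the rank-`≤ i` vectors of the intersection. -/
def rmlMeet (Fq : Type*) {L : Type*} [Field Fq] [Field L] [Algebra Fq L] {n : ℕ} (i : ℕ)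
    (X Y : Submodule L (Fin n → L)) : Submodule L (Fin n → L) :=
  Submodule.span L {x | x ∈ X ⊓ Y ∧ rkVec Fq x ≤ i}

/-- `X` is a modular element of the rank-metric lattice `L_i`. -/
def IsModularElt (Fq : Type*) {L : Type*} [Field Fq] [Field L] [Algebra Fq L] {n : ℕ} (i : ℕ)
    (X : Submodule L (Fin n → L)) : Prop :=
  ∀ Y ∈ RML Fq L n i,
    Module.finrank L ↥(rmlMeet Fq i X Y) + Module.finrank L ↥(X ⊔ Y)
      = Module.finrank L ↥X + Module.finrank L ↥Y

/-- The `(i,j)`-th lattice-rank weight of a code `C ≤ L^n`. -/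
noncomputable def latticeRankWeight (Fq L : Type*) [Field Fq] [Field L] [Algebra Fq L]
    (n i j : ℕ) (C : Submodule L (Fin n → L)) : ℕ :=
  sInf {u | ∃ X ∈ RML Fq L n i, Module.finrank L ↥X = u ∧ j ≤ Module.finrank L ↥(C ⊓ X)}


section helpers

variable {Fq L : Type*} [Field Fq] [Field L] [Algebra Fq L] {n : ℕ}

lemma rkVec_zero : rkVec Fq (0 : Fin n → L) = 0 := by
  unfold rkVec
  have : Set.range (0 : Fin n → L) ⊆ {0} := by rintro x ⟨j, rfl⟩; rfl
  have h : Submodule.span Fq (Set.range (0 : Fin n → L)) = ⊥ := by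
    rw [← Submodule.span_empty (R := Fq) (M := L)]
    apply le_antisymm
    · refine span_le.2 ?_
      rintro x ⟨j, rfl⟩; simp
    · exact span_mono (Set.empty_subset _)
  rw [h]; simp

lemma rkVec_add_le (u w : Fin n → L) : rkVec Fq (u + w) ≤ rkVec Fq u + rkVec Fq w := by
  unfold rkVec
  haveI := FiniteDimensional.span_of_finite Fq (Set.finite_range u)
  haveI := FiniteDimensional.span_of_finite Fq (Set.finite_range w)
  have hle : Submodule.span Fq (Set.range (u + w)) ≤
      Submodule.span Fq (Set.range u) ⊔ Submodule.span Fq (Set.range w) := by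
    refine span_le.2 ?_
    rintro x ⟨j, rfl⟩
    exact add_mem (le_sup_left (α := Submodule Fq L) (subset_span ⟨j, rfl⟩))
      (le_sup_right (α := Submodule Fq L) (subset_span ⟨j, rfl⟩))
  calc Module.finrank Fq ↥(Submodule.span Fq (Set.range (u + w)))
      ≤ Module.finrank Fq ↥(Submodule.span Fq (Set.range u) ⊔ Submodule.span Fq (Set.range w)) :=
        Submodule.finrank_mono hle
    _ ≤ _ := by
        have := Submodule.finrank_sup_add_finrank_inf_eq (Submodule.span Fq (Set.range u))
          (Submodule.span Fq (Set.range w))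
        omega

lemma rkVec_smul_le (c : L) (w : Fin n → L) : rkVec Fq (c • w) ≤ rkVec Fq w := by
  unfold rkVec
  haveI := FiniteDimensional.span_of_finite Fq (Set.finite_range w)
  let f : L →ₗ[Fq] L :=
    { toFun := fun x => c * x
      map_add' := fun a b => mul_add c a b
      map_smul' := fun r a => by simp [Algebra.mul_smul_comm] }
  have : Submodule.span Fq (Set.range (c • w)) =
      (Submodule.span Fq (Set.range w)).map f := by
    rw [Submodule.map_span]
    congr 1
    ext x
    constructor
    · rintro ⟨j, rfl⟩; exact ⟨w j, ⟨j, rfl⟩, rfl⟩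
    · rintro ⟨y, ⟨j, rfl⟩, rfl⟩; exact ⟨j, rfl⟩
  rw [this]
  exact Submodule.finrank_map_le f _

lemma rkVec_single_le (j : Fin n) : rkVec Fq (Pi.single j (1 : L)) ≤ 1 := by
  unfold rkVec
  haveI := FiniteDimensional.span_of_finite Fq (Set.finite_singleton (1 : L))
  have hle : Submodule.span Fq (Set.range (Pi.single j (1 : L))) ≤
      Submodule.span Fq {(1 : L)} := by
    refine span_le.2 ?_
    rintro x ⟨a, rfl⟩
    by_cases h : a = j
    · subst h; simp only [Pi.single_eq_same]; exact subset_span rfl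
    · rw [Pi.single_eq_of_ne h]; exact zero_mem _
  calc Module.finrank Fq ↥(Submodule.span Fq (Set.range (Pi.single j (1 : L))))
      ≤ Module.finrank Fq ↥(Submodule.span Fq {(1 : L)}) := Submodule.finrank_mono hle
    _ = 1 := finrank_span_singleton one_ne_zero

lemma span_mem_RML {i : ℕ} {S : Set (Fin n → L)} (hS : ∀ x ∈ S, rkVec Fq x ≤ i) :
    Submodule.span L S ∈ RML Fq L n i := by
  apply le_antisymm
  · exact span_mono fun x hx => ⟨subset_span hx, hS x hx⟩
  · exact span_le.2 fun x hx => hx.1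

lemma top_mem_RML {i : ℕ} (hi : 1 ≤ i) : (⊤ : Submodule L (Fin n → L)) ∈ RML Fq L n i := by
  have hspan : Submodule.span L (Set.range fun j : Fin n => Pi.single j (1 : L)) = ⊤ := by
    have := (Pi.basisFun L (Fin n)).span_eq
    have hr : Set.range ⇑(Pi.basisFun L (Fin n))
        = Set.range fun j : Fin n => Pi.single j (1 : L) := by
      ext x; simp [Pi.basisFun_apply]
    rwa [hr] at this
  rw [← hspan]
  exact span_mem_RML (by rintro x ⟨j, rfl⟩; exact le_trans (rkVec_single_le j) hi)

lemma rkVec_le_of_mem_span {i : ℕ} (s : Finset (Fin n → L))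
    (hs : ∀ x ∈ s, rkVec Fq x ≤ i) :
    ∀ v ∈ Submodule.span L (s : Set (Fin n → L)), rkVec Fq v ≤ i * s.card := by
  classical
  induction s using Finset.induction_on with
  | empty =>
      intro v hv
      simp only [Finset.coe_empty, Submodule.span_empty, Submodule.mem_bot] at hv
      subst hv; simp [rkVec_zero]
  | @insert a s ha ih =>
      intro v hv
      rw [Finset.coe_insert, Submodule.span_insert] at hv
      obtain ⟨u, hu, w, hw, rfl⟩ := Submodule.mem_sup.1 hv
      obtain ⟨c, rfl⟩ := Submodule.mem_span_singleton.1 hu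
      have h1 : rkVec Fq (c • a) ≤ i := le_trans (rkVec_smul_le c a)
        (hs a (Finset.mem_insert_self a s))
      have h2 : rkVec Fq w ≤ i * s.card := ih (fun x hx => hs x (Finset.mem_insert_of_mem hx)) w hw
      have h3 := rkVec_add_le (Fq := Fq) (c • a) w
      rw [Finset.card_insert_of_notMem ha]
      calc rkVec Fq (c • a + w) ≤ rkVec Fq (c • a) + rkVec Fq w := h3
        _ ≤ i + i * s.card := by omega
        _ = i * (s.card + 1) := by ring

/-- For `X ∈ RML` nonzero there is an element of `RML` below `X` of codimension one. -/
lemma exists_rml_hyperplane {i : ℕ} {X : Submodule L (Fin n → L)} (hX : X ∈ RML Fq L n i)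
    (hX0 : X ≠ ⊥) :
    ∃ X' ∈ RML Fq L n i, X' ≤ X ∧
      Module.finrank L ↥X' + 1 = Module.finrank L ↥X := by
  classical
  obtain ⟨b, hbS, hbspan, hbind⟩ :=
    exists_linearIndependent L {x | x ∈ X ∧ rkVec Fq x ≤ i}
  rw [← hX] at hbspan
  have hbne : b.Nonempty := by
    rcases Set.eq_empty_or_nonempty b with h | h
    · exfalso; apply hX0; rw [← hbspan, h, Submodule.span_empty]
    · exact h
  obtain ⟨x0, hx0⟩ := hbne
  set X' : Submodule L (Fin n → L) := Submodule.span L (b \ {x0}) with hX'def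
  have hX'mem : X' ∈ RML Fq L n i :=
    span_mem_RML fun x hx => (hbS hx.1).2
  have hX'le : X' ≤ X := by
    rw [← hbspan]; exact span_mono Set.diff_subset
  -- x0 ∉ X'
  have hx0not : x0 ∉ X' := by
    have himg : (Subtype.val '' {y : ↑b | (y : Fin n → L) ≠ x0}) = b \ {x0} := by
      ext x
      constructor
      · rintro ⟨⟨x, hxb⟩, hne, rfl⟩; exact ⟨hxb, hne⟩
      · rintro ⟨hxb, hne⟩; exact ⟨⟨x, hxb⟩, hne, rfl⟩
    have := hbind.notMem_span_image (x := (⟨x0, hx0⟩ : ↑b))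
      (s := {y : ↑b | (y : Fin n → L) ≠ x0}) (by simp)
    rwa [himg] at this
  have hlt : X' < X := lt_of_le_of_ne hX'le (by
    intro h
    exact hx0not (h ▸ (hbspan ▸ subset_span hx0 : x0 ∈ X)))
  have hfinlt : Module.finrank L ↥X' < Module.finrank L ↥X :=
    Submodule.finrank_lt_finrank_of_lt hlt
  -- X ≤ span {x0} ⊔ X'
  have hsup : X = Submodule.span L {x0} ⊔ X' := by
    rw [← hbspan, hX'def, ← Submodule.span_insert]
    congr 1
    rw [Set.insert_diff_singleton, Set.insert_eq_self.2 hx0]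
  have hfle : Module.finrank L ↥X ≤ Module.finrank L ↥X' + 1 := by
    have h1 : Module.finrank L ↥(Submodule.span L {x0}) = 1 :=
      finrank_span_singleton (hbind.ne_zero ⟨x0, hx0⟩)
    have := Submodule.finrank_sup_add_finrank_inf_eq (Submodule.span L {x0}) X'
    rw [h1] at this
    rw [hsup]
    omega
  exact ⟨X', hX'mem, hX'le, by omega⟩

end helpers

lemma rkVec_le_finrank_mul {Fq L : Type*} [Field Fq] [Field L] [Algebra Fq L] {n i : ℕ}
    {X : Submodule L (Fin n → L)} (hX : X ∈ RML Fq L n i)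
    {v : Fin n → L} (hv : v ∈ X) : rkVec Fq v ≤ i * Module.finrank L ↥X := by
  classical
  obtain ⟨b, hbS, hbspan, hbind⟩ :=
    exists_linearIndependent L {x | x ∈ X ∧ rkVec Fq x ≤ i}
  rw [← hX] at hbspan
  have hbfin : b.Finite := hbind.setFinite
  haveI := hbfin.fintype
  have hcard : Module.finrank L ↥X = b.toFinset.card := by
    rw [← hbspan]; exact finrank_span_set_eq_card hbind
  have hbd := rkVec_le_of_mem_span (Fq := Fq) (i := i) b.toFinset
    (fun x hx => (hbS (Set.mem_toFinset.1 hx)).2) v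
    (by rw [Set.coe_toFinset, hbspan]; exact hv)
  rwa [← hcard] at hbd

theorem latticeRankWeight_monotone_and_bounds (q m n k d : ℕ) (hq : IsPrimePow q)
    (hn : 2 ≤ n) (hm : 2 ≤ m)
    (Fq L : Type) [Field Fq] [Field L] [Algebra Fq L] [Fintype Fq]
    (hcard : Fintype.card Fq = q) (hdim : Module.finrank Fq L = m)
    (C : Submodule L (Fin n → L)) (hk : Module.finrank L ↥C = k) (hk1 : 1 ≤ k)
    (i : ℕ) (hi : 1 ≤ i) (hin : i ≤ n)
    (hd : IsLeast {r | ∃ v ∈ C, v ≠ 0 ∧ rkVec Fq v = r} d) :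
    (∀ j, 1 ≤ j → j + 1 ≤ k →
        latticeRankWeight Fq L n i j C < latticeRankWeight Fq L n i (j + 1) C) ∧
      (∀ j, 1 ≤ j → j ≤ k →
        latticeRankWeight Fq L n i j C ≤ n - k + j ∧
          (d + i - 1) / i + j - 1 ≤ latticeRankWeight Fq L n i j C) := by
  classical
  have hmem_top : ∀ j : ℕ, j ≤ k → ∃ X ∈ RML Fq L n i,
      Module.finrank L ↥X = n ∧ j ≤ Module.finrank L ↥(C ⊓ X) := by
    intro j hj
    refine ⟨⊤, top_mem_RML hi, ?_, ?_⟩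
    · rw [finrank_top]; exact Module.finrank_fin_fun L
    · rw [inf_top_eq, hk]; exact hj
  have hattain : ∀ j : ℕ, j ≤ k → ∃ X ∈ RML Fq L n i,
      Module.finrank L ↥X = latticeRankWeight Fq L n i j C ∧
        j ≤ Module.finrank L ↥(C ⊓ X) := by
    intro j hj
    unfold latticeRankWeight
    exact Nat.sInf_mem (s := {u | ∃ X ∈ RML Fq L n i, Module.finrank L ↥X = u ∧ j ≤ Module.finrank L ↥(C ⊓ X)}) ⟨n, hmem_top j hj⟩
  have hle_n : ∀ j : ℕ, j ≤ k → latticeRankWeight Fq L n i j C ≤ n := by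
    intro j hj
    unfold latticeRankWeight
    exact Nat.sInf_le (s := {u | ∃ X ∈ RML Fq L n i, Module.finrank L ↥X = u ∧ j ≤ Module.finrank L ↥(C ⊓ X)}) (hmem_top j hj)
  have hsInf_le : ∀ j u : ℕ, (∃ X ∈ RML Fq L n i,
      Module.finrank L ↥X = u ∧ j ≤ Module.finrank L ↥(C ⊓ X)) →
      latticeRankWeight Fq L n i j C ≤ u := by
    intro j u h
    unfold latticeRankWeight
    exact Nat.sInf_le (s := {u | ∃ X ∈ RML Fq L n i, Module.finrank L ↥X = u ∧ j ≤ Module.finrank L ↥(C ⊓ X)}) h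
  -- strict monotonicity
  have hstrict : ∀ j, 1 ≤ j → j + 1 ≤ k →
      latticeRankWeight Fq L n i j C < latticeRankWeight Fq L n i (j + 1) C := by
    intro j hj hjk
    obtain ⟨X, hX, hXu, hXj⟩ := hattain (j + 1) hjk
    have hXne : X ≠ ⊥ := by
      intro h
      rw [h, inf_bot_eq] at hXj
      rw [finrank_bot] at hXj
      omega
    obtain ⟨X', hX', hle, hdimX⟩ := exists_rml_hyperplane hX hXne
    have hCX' : j ≤ Module.finrank L ↥(C ⊓ X') := by
      have h1 := Submodule.finrank_sup_add_finrank_inf_eq (C ⊓ X) X'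
      have h2 : (C ⊓ X) ⊔ X' ≤ X := sup_le inf_le_right hle
      have h3 : Module.finrank L ↥((C ⊓ X) ⊔ X') ≤ Module.finrank L ↥X :=
        Submodule.finrank_mono h2
      have h4 : (C ⊓ X) ⊓ X' = C ⊓ X' := by
        rw [inf_assoc, inf_eq_right.2 hle]
      rw [h4] at h1
      omega
    have h5 : latticeRankWeight Fq L n i j C ≤ Module.finrank L ↥X' :=
      hsInf_le j _ ⟨X', hX', rfl, hCX'⟩
    omega
  refine ⟨hstrict, ?_⟩
  -- upper bound
  have hupper : ∀ t j, 1 ≤ j → j + t = k → latticeRankWeight Fq L n i j C + t ≤ n := by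
    intro t
    induction t with
    | zero =>
        intro j hj hjk
        have := hle_n j (by omega)
        omega
    | succ t ih =>
        intro j hj hjk
        have h1 := hstrict j hj (by omega)
        have h2 := ih (j + 1) (by omega) (by omega)
        omega
  -- lower bound
  have hlow : ∀ j, 1 ≤ j → j ≤ k →
      (d + i - 1) / i + j ≤ latticeRankWeight Fq L n i j C + 1 := by
    intro j
    induction j with
    | zero => omega
    | succ j ih =>
        intro _ hjk
        rcases Nat.eq_zero_or_pos j with hj0 | hj0
        · subst hj0
          obtain ⟨X, hX, hXu, hX1⟩ := hattain 1 (by omega)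
          have hne : C ⊓ X ≠ ⊥ := by
            intro h
            rw [h, finrank_bot] at hX1
            omega
          obtain ⟨v, hvmem, hv0⟩ := (Submodule.ne_bot_iff _).1 hne
          have hdrk : d ≤ rkVec Fq v :=
            hd.2 ⟨v, (inf_le_left : C ⊓ X ≤ C) hvmem, hv0, rfl⟩
          have hrkle : rkVec Fq v ≤ i * Module.finrank L ↥X :=
            rkVec_le_finrank_mul hX ((inf_le_right : C ⊓ X ≤ X) hvmem)
          set t := latticeRankWeight Fq L n i 1 C with ht
          rw [hXu] at hrkle
          have hdiv : (d + i - 1) / i < t + 1 := by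
            rw [Nat.div_lt_iff_lt_mul (by omega : 0 < i), add_mul, one_mul]
            have hc : i * t = t * i := mul_comm i t
            omega
          omega
        · have h1 := hstrict j hj0 (by omega)
          have h2 := ih hj0 (by omega)
          omega
  intro j hj hjk
  constructor
  · have := hupper (k - j) j hj (by omega)
    omega
  · have := hlow j hj hjk
    omega
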